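/- Let Ω ⊆ ℝ² be open and f : Ω → ℝ a positive C² function. Suppose W₁, W₂ : Ω → ℝ are C² and satisfy ∂_z̄(W₁ + i W₂) = (f_z̄/f)·(W₁ − i W₂) on Ω. Then V := f·W₂ satisfies div(f^{-2}·∇V) = 0 on Ω. -/

import Mathlib

/-- Partial derivative in `x` of a real-valued function on `ℝ²`. -/
noncomputable def pdxR (F : ℝ × ℝ → ℝ) (p : ℝ × ℝ) : ℝ :=
  deriv (fun t => F (t, p.2)) p.1

/-- Partial derivative in `y` of a real-valued function on `ℝ²`. -/
noncomputable def pdyR (F : ℝ × ℝ → ℝ) (p : ℝ × ℝ) : ℝ :=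
  deriv (fun t => F (p.1, t)) p.2

/-- The Laplacian of a real-valued function on `ℝ²`. -/
noncomputable def lapR (F : ℝ × ℝ → ℝ) (p : ℝ × ℝ) : ℝ :=
  pdxR (pdxR F) p + pdyR (pdyR F) p

/-- Partial derivative in `x` of a complex-valued function on `ℝ²`. -/
noncomputable def pdx (F : ℝ × ℝ → ℂ) (p : ℝ × ℝ) : ℂ :=
  deriv (fun t => F (t, p.2)) p.1

/-- Partial derivative in `y` of a complex-valued function on `ℝ²`. -/
noncomputable def pdy (F : ℝ × ℝ → ℂ) (p : ℝ × ℝ) : ℂ :=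
  deriv (fun t => F (p.1, t)) p.2

/-- The Wirtinger operator `∂_z̄ = ½(∂_x + i∂_y)`. -/
noncomputable def dzbar (F : ℝ × ℝ → ℂ) (p : ℝ × ℝ) : ℂ :=
  (pdx F p + Complex.I * pdy F p) / 2

/-- The Wirtinger operator `∂_z = ½(∂_x − i∂_y)`. -/
noncomputable def dz (F : ℝ × ℝ → ℂ) (p : ℝ × ℝ) : ℂ :=
  (pdx F p - Complex.I * pdy F p) / 2

open Filter Topology

lemma tendX (p : ℝ × ℝ) : Tendsto (fun t => (t, p.2)) (𝓝 p.1) (𝓝 p) := by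
  have := (continuous_id.prodMk (continuous_const (y := p.2))).tendsto p.1
  simpa using this

lemma tendY (p : ℝ × ℝ) : Tendsto (fun t => (p.1, t)) (𝓝 p.2) (𝓝 p) := by
  have := ((continuous_const (y := p.1)).prodMk continuous_id).tendsto p.2
  simpa using this

lemma pdxR_congr {F G : ℝ × ℝ → ℝ} {p : ℝ × ℝ} (h : F =ᶠ[𝓝 p] G) :
    pdxR F p = pdxR G p :=
  Filter.EventuallyEq.deriv_eq (h.comp_tendsto (tendX p))

lemma pdyR_congr {F G : ℝ × ℝ → ℝ} {p : ℝ × ℝ} (h : F =ᶠ[𝓝 p] G) :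
    pdyR F p = pdyR G p :=
  Filter.EventuallyEq.deriv_eq (h.comp_tendsto (tendY p))

lemma hasDerivAt_lineX (p : ℝ × ℝ) :
    HasDerivAt (fun t : ℝ => (t, p.2)) ((1 : ℝ), (0 : ℝ)) p.1 :=
  (hasDerivAt_id p.1).prodMk (hasDerivAt_const p.1 p.2)

lemma hasDerivAt_lineY (p : ℝ × ℝ) :
    HasDerivAt (fun t : ℝ => (p.1, t)) ((0 : ℝ), (1 : ℝ)) p.2 :=
  (hasDerivAt_const p.2 p.1).prodMk (hasDerivAt_id p.2)

lemma pdxR_hasFDerivAt {F : ℝ × ℝ → ℝ} {L : ℝ × ℝ →L[ℝ] ℝ} {p : ℝ × ℝ}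
    (h : HasFDerivAt F L p) :
    HasDerivAt (fun t => F (t, p.2)) (L (1, 0)) p.1 := by
  have h' : HasFDerivAt F L (p.1, p.2) := by rwa [Prod.mk.eta]
  exact h'.comp_hasDerivAt p.1 (hasDerivAt_lineX p)

lemma pdyR_hasFDerivAt {F : ℝ × ℝ → ℝ} {L : ℝ × ℝ →L[ℝ] ℝ} {p : ℝ × ℝ}
    (h : HasFDerivAt F L p) :
    HasDerivAt (fun t => F (p.1, t)) (L (0, 1)) p.2 := by
  have h' : HasFDerivAt F L (p.1, p.2) := by rwa [Prod.mk.eta]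
  exact h'.comp_hasDerivAt p.2 (hasDerivAt_lineY p)

lemma pdxR_eq {F : ℝ × ℝ → ℝ} {p : ℝ × ℝ} (h : DifferentiableAt ℝ F p) :
    pdxR F p = fderiv ℝ F p (1, 0) := (pdxR_hasFDerivAt h.hasFDerivAt).deriv

lemma pdyR_eq {F : ℝ × ℝ → ℝ} {p : ℝ × ℝ} (h : DifferentiableAt ℝ F p) :
    pdyR F p = fderiv ℝ F p (0, 1) := (pdyR_hasFDerivAt h.hasFDerivAt).deriv

lemma hasDerivAt_pdxR {F : ℝ × ℝ → ℝ} {p : ℝ × ℝ} (h : DifferentiableAt ℝ F p) :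
    HasDerivAt (fun t => F (t, p.2)) (pdxR F p) p.1 := by
  rw [pdxR_eq h]; exact pdxR_hasFDerivAt h.hasFDerivAt

lemma hasDerivAt_pdyR {F : ℝ × ℝ → ℝ} {p : ℝ × ℝ} (h : DifferentiableAt ℝ F p) :
    HasDerivAt (fun t => F (p.1, t)) (pdyR F p) p.2 := by
  rw [pdyR_eq h]; exact pdyR_hasFDerivAt h.hasFDerivAt

/-- Clairaut for C² functions. -/
lemma pdxR_pdyR_symm {Ω : Set (ℝ × ℝ)} (hΩ : IsOpen Ω) {u : ℝ × ℝ → ℝ}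
    (hu : ContDiffOn ℝ 2 u Ω) {p : ℝ × ℝ} (hp : p ∈ Ω) :
    pdxR (pdyR u) p = pdyR (pdxR u) p := by
  have hu2 : ContDiffAt ℝ 2 u p := hu.contDiffAt (hΩ.mem_nhds hp)
  have hdiff : ∀ᶠ q in 𝓝 p, DifferentiableAt ℝ u q := by
    filter_upwards [hΩ.mem_nhds hp] with q hq
    exact ((hu.contDiffAt (hΩ.mem_nhds hq)).differentiableAt (by norm_num))
  have hf' : DifferentiableAt ℝ (fderiv ℝ u) p :=
    (hu2.fderiv_right (m := 1) (by norm_num)).differentiableAt one_ne_zero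
  have hsymm : IsSymmSndFDerivAt ℝ u p := hu2.isSymmSndFDerivAt (by simp)
  -- express pdyR u near p as a CLM applied to fderiv
  have ey : pdyR u =ᶠ[𝓝 p] fun q => fderiv ℝ u q (0, 1) := by
    filter_upwards [hdiff] with q hq using pdyR_eq hq
  have ex : pdxR u =ᶠ[𝓝 p] fun q => fderiv ℝ u q (1, 0) := by
    filter_upwards [hdiff] with q hq using pdxR_eq hq
  rw [pdxR_congr ey, pdyR_congr ex]
  have happly : ∀ v : ℝ × ℝ, HasFDerivAt (fun q => fderiv ℝ u q v)
      (((ContinuousLinearMap.apply ℝ ℝ v).comp (fderiv ℝ (fderiv ℝ u) p))) p :=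
    fun v => (ContinuousLinearMap.apply ℝ ℝ v).hasFDerivAt.comp p hf'.hasFDerivAt
  unfold pdxR pdyR
  rw [(pdxR_hasFDerivAt (happly (0,1))).deriv, (pdyR_hasFDerivAt (happly (1,0))).deriv]
  exact hsymm (1,0) (0,1)

/-- Vekua equation, vector part and the reciprocal conductivity equation: if
`W = W₁ + iW₂` solves `W_z̄ = (f_z̄/f)·W̄` then `V = f·W₂` solves
`div(f⁻² ∇V) = 0` on `Ω`. -/
theorem vekua_vector_part_conductivity
    (Ω : Set (ℝ × ℝ)) (hΩ : IsOpen Ω) (f : ℝ × ℝ → ℝ)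
    (hf : ContDiffOn ℝ 2 f Ω) (hfpos : ∀ p ∈ Ω, 0 < f p)
    (W₁ W₂ : ℝ × ℝ → ℝ)
    (hW₁ : ContDiffOn ℝ 2 W₁ Ω) (hW₂ : ContDiffOn ℝ 2 W₂ Ω)
    (hVek : ∀ p ∈ Ω,
      dzbar (fun q => (W₁ q : ℂ) + (W₂ q : ℂ) * Complex.I) p =
        dzbar (fun q => (f q : ℂ)) p / (f p : ℂ) *
          ((W₁ p : ℂ) - (W₂ p : ℂ) * Complex.I)) :
    ∀ p ∈ Ω,
      pdxR (fun q => (f q ^ 2)⁻¹ * pdxR (fun w => f w * W₂ w) q) p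
        + pdyR (fun q => (f q ^ 2)⁻¹ * pdyR (fun w => f w * W₂ w) q) p = 0 := by
  have hfd : ∀ q ∈ Ω, DifferentiableAt ℝ f q := fun q hq =>
    (hf.contDiffAt (hΩ.mem_nhds hq)).differentiableAt two_ne_zero
  have hW₁d : ∀ q ∈ Ω, DifferentiableAt ℝ W₁ q := fun q hq =>
    (hW₁.contDiffAt (hΩ.mem_nhds hq)).differentiableAt two_ne_zero
  have hW₂d : ∀ q ∈ Ω, DifferentiableAt ℝ W₂ q := fun q hq =>
    (hW₂.contDiffAt (hΩ.mem_nhds hq)).differentiableAt two_ne_zero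
  -- real form of the Vekua equation
  have key : ∀ q ∈ Ω,
      f q * (pdxR W₁ q - pdyR W₂ q) = pdxR f q * W₁ q + pdyR f q * W₂ q ∧
      f q * (pdxR W₂ q + pdyR W₁ q) = pdyR f q * W₁ q - pdxR f q * W₂ q := by
    intro q hq
    have hfq := hfd q hq
    have h1q := hW₁d q hq
    have h2q := hW₂d q hq
    have hv := hVek q hq
    simp only [dzbar, pdx, pdy] at hv
    erw [(((hasDerivAt_pdxR h1q).ofReal_comp).add (((hasDerivAt_pdxR h2q).ofReal_comp).mul_const Complex.I)).deriv,
        (((hasDerivAt_pdyR h1q).ofReal_comp).add (((hasDerivAt_pdyR h2q).ofReal_comp).mul_const Complex.I)).deriv,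
        ((hasDerivAt_pdxR hfq).ofReal_comp).deriv,
        ((hasDerivAt_pdyR hfq).ofReal_comp).deriv] at hv
    have hfne : (f q : ℂ) ≠ 0 := by exact_mod_cast (hfpos q hq).ne'
    field_simp at hv
    rw [Complex.ext_iff] at hv
    simp at hv
    exact ⟨by linear_combination hv.1, by linear_combination hv.2⟩
  -- u = W₁ / f is C² on Ω
  set u : ℝ × ℝ → ℝ := fun q => W₁ q / f q with hu_def
  have hu : ContDiffOn ℝ 2 u Ω := hW₁.div hf (fun q hq => (hfpos q hq).ne')
  have hud : ∀ q ∈ Ω, DifferentiableAt ℝ u q := fun q hq =>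
    (hu.contDiffAt (hΩ.mem_nhds hq)).differentiableAt two_ne_zero
  -- the two flux components in terms of u
  have keyX : ∀ q ∈ Ω,
      (f q ^ 2)⁻¹ * pdxR (fun w => f w * W₂ w) q = -pdyR u q := by
    intro q hq
    have hfq := hfd q hq
    have h2q := hW₂d q hq
    have h1q := hW₁d q hq
    have hfne : f q ≠ 0 := (hfpos q hq).ne'
    have hVx : pdxR (fun w => f w * W₂ w) q = pdxR f q * W₂ q + f q * pdxR W₂ q := by
      have := ((hasDerivAt_pdxR hfq).mul (hasDerivAt_pdxR h2q)).deriv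
      simpa [pdxR, Pi.mul_def] using this
    have hUy : pdyR u q = (pdyR W₁ q * f q - W₁ q * pdyR f q) / f q ^ 2 := by
      have := ((hasDerivAt_pdyR h1q).div (hasDerivAt_pdyR hfq) hfne).deriv
      simpa [pdyR, hu_def, Pi.div_def] using this
    rw [hVx, hUy]
    have hB := (key q hq).2
    field_simp
    ring_nf
    ring_nf at hB
    linarith [hB]
  have keyY : ∀ q ∈ Ω,
      (f q ^ 2)⁻¹ * pdyR (fun w => f w * W₂ w) q = pdxR u q := by
    intro q hq
    have hfq := hfd q hq
    have h2q := hW₂d q hq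
    have h1q := hW₁d q hq
    have hfne : f q ≠ 0 := (hfpos q hq).ne'
    have hVy : pdyR (fun w => f w * W₂ w) q = pdyR f q * W₂ q + f q * pdyR W₂ q := by
      have := ((hasDerivAt_pdyR hfq).mul (hasDerivAt_pdyR h2q)).deriv
      simpa [pdyR, Pi.mul_def] using this
    have hUx : pdxR u q = (pdxR W₁ q * f q - W₁ q * pdxR f q) / f q ^ 2 := by
      have := ((hasDerivAt_pdxR h1q).div (hasDerivAt_pdxR hfq) hfne).deriv
      simpa [pdxR, hu_def, Pi.div_def] using this
    rw [hVy, hUx]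
    have hA := (key q hq).1
    field_simp
    ring_nf
    ring_nf at hA
    linarith [hA]
  intro p hp
  have hEqX : (fun q => (f q ^ 2)⁻¹ * pdxR (fun w => f w * W₂ w) q)
      =ᶠ[𝓝 p] fun q => -pdyR u q := by
    filter_upwards [hΩ.mem_nhds hp] with q hq using keyX q hq
  have hEqY : (fun q => (f q ^ 2)⁻¹ * pdyR (fun w => f w * W₂ w) q)
      =ᶠ[𝓝 p] fun q => pdxR u q := by
    filter_upwards [hΩ.mem_nhds hp] with q hq using keyY q hq
  rw [pdxR_congr hEqX, pdyR_congr hEqY]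
  have hneg : pdxR (fun q => -pdyR u q) p = -pdxR (pdyR u) p := by
    simp [pdxR, deriv.neg]
  rw [hneg, pdxR_pdyR_symm hΩ hu hp]
  ring
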